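/- Let X = (X_n)_{n≥0} be the final-letter process of a SVLMC defined by a bamboo blossom with stationary measure π, and let w = w₁…w_k be a finite word such that w̄ is not an internal node of the context tree. Then for |x| < 1 the generating function of the first occurrence of w is Φ_w^{(1)}(x) = x^k π(w)/((1−x) S_w(x)) and that of the r-th occurrence is Φ_w^{(r)}(x) = Φ_w^{(1)}(x)·(1 − 1/S_w(x))^{r−1}, where: (i) if w is of the form *00(10)^ℓ or *11(01)^ℓ0 (ℓ ∈ ℕ), S_w(x) = C_w(x) + ∑_{j≥k} q_{pref(w)}^{(j)}(w) x^j with C_w(x) = 1 + ∑_{j=1}^{k−1} 1[w_{j+1}…w_k = w₁…w_{k−j}] q_{pref(w)}^{(j)}(w_{k−j+1}…w_k) x^j; (ii) if w is of the form *00(10)^ℓ1, the same formulas hold with q_{pref(w)}^{(j)} replaced by q_{1(01)^ℓ00}^{(j)}, and if w is of the form *11(01)^ℓ, with q_{pref(w)}^{(j)} replaced by q_{(10)^ℓ11}^{(j)}. -/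

import Mathlib

/-!
In the bamboo blossom the context of a past is read off from the first position at which it
differs from the alternating sequence `…1010`: an even position `2n` gives the context
`(01)ⁿ1`, an odd one `2n+1` the context `(01)ⁿ00`. Two equal adjacent letters always create such
a difference, so a word `z` containing them fixes the context of every past ending with `z`;
each of the four admissible suffixes of `w` starts with `00` or `11`. After an occurrence of
`w` the chain therefore evolves exactly as from the past `z`, and stationarity gives
`π(w u) = π(w) P_z(u)`.

Cutting a word at the first occurrence of `w`, at the first return of `w` after an occurrence,
and at the `r`-th occurrence yields three renewal equations
`π(w) 𝟙[n ≥ k] = ∑ₜ P(T⁽¹⁾ = t) g(n - t)`, `g = δ₀ + f ⋆ g` and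
`P(T⁽ʳ⁺¹⁾ = n) = ∑ₜ P(T⁽ʳ⁾ = t) f(n - t)`, where `g j` (`returnProb`) is the probability that
`w` occurs again `j` letters after an occurrence and `f j` (`firstReturnProb`) that its next
occurrence is there. For the generating functions this reads `Φ⁽¹⁾ G = xᵏ π(w) / (1 - x)`,
`F G = G - 1` and `Φ⁽ʳ⁺¹⁾ = Φ⁽ʳ⁾ F`, and splitting `G` at `j = k` shows `G = S_w`.
-/

open MeasureTheory
open ProbabilityTheory (Kernel IsMarkovKernel)
open scoped ENNReal

namespace VLMC

/-- Left-infinite sequences over the alphabet `{0,1}`; `s 0` is the rightmost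
(most recent) letter, `s 1` the one before it, etc. -/
abbrev L : Type := ℕ → Bool

/-- Append the letter `b` on the right of the left-infinite sequence `s`. -/
def extend (b : Bool) (s : L) : L := fun n => match n with
  | 0 => b
  | k + 1 => s k

/-- Sequences whose letters, read from the rightmost one leftwards, start with `u`. -/
def cylRev (u : List Bool) : Set L := {s | ∀ i < u.length, s i = u.getD i false}

/-- The cylinder `Lw` of left-infinite sequences admitting the finite word `w` as a suffix. -/
def cyl (w : List Bool) : Set L := cylRev w.reverse

/-- `π` is a stationary (invariant) probability measure for the kernel `κ`. -/
def IsStationary (κ : Kernel L L) (π : Measure L) : Prop :=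
  ∀ B : Set L, MeasurableSet B → π B = ∫⁻ s, κ s B ∂π

/-- The word `(01)ⁿ`. -/
def pow01 : ℕ → List Bool
  | 0 => []
  | n + 1 => false :: true :: pow01 n

/-- The word `(10)ⁿ`. -/
def pow10 : ℕ → List Bool
  | 0 => []
  | n + 1 => true :: false :: pow10 n

/-- The left-infinite sequence `(10)^∞ = …1010`, which is the sequence matched
by the infinite context `(01)^∞` of the bamboo blossom. -/
def altSeq : L := fun i => decide (i % 2 = 1)

/-- The left-infinite sequence `(10)^∞1 = …10101`. -/
def altSeq1 : L := fun i => decide (i % 2 = 0)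

/-- `κ` is the transition kernel of the VLMC associated with the probabilized
bamboo blossom, whose contexts are the finite words `(01)ⁿ1` and `(01)ⁿ00`
(`n ≥ 0`), with probability measures `q1 n` and `q00 n` on the alphabet, and the
infinite word `(01)^∞`, with probability measure `qinf`. -/
def IsBambooKernel (q1 q00 : ℕ → Bool → ℝ≥0∞) (qinf : Bool → ℝ≥0∞)
    (κ : Kernel L L) : Prop :=
  (∀ (n : ℕ) (s : L), s ∈ cylRev (pow01 n ++ [true]) →
      κ s = q1 n false • Measure.dirac (extend false s)
          + q1 n true • Measure.dirac (extend true s)) ∧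
  (∀ (n : ℕ) (s : L), s ∈ cylRev (pow01 n ++ [false, false]) →
      κ s = q00 n false • Measure.dirac (extend false s)
          + q00 n true • Measure.dirac (extend true s)) ∧
  κ altSeq = qinf false • Measure.dirac (extend false altSeq)
           + qinf true • Measure.dirac (extend true altSeq)

/-- `cₙ = q₁(0)ⁿ ∏_{k<n} g k` : with `g k = q_{(01)ᵏ1}(1)` this is `cₙ(1)`, and
with `g k = q_{(01)ᵏ00}(1)` this is `cₙ(00)`. -/
noncomputable def bambooC (qroot : ℝ≥0∞) (g : ℕ → ℝ≥0∞) (n : ℕ) : ℝ≥0∞ :=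
  qroot ^ n * ∏ k ∈ Finset.range n, g k

attribute [local instance] Classical.propDecidable

/-- The transition probability of the bamboo blossom from the state `s` :
`q1 n` if the context of `s` is `(01)ⁿ1`, `q00 n` if it is `(01)ⁿ00`, and
`qinf` if `s` matches the infinite context `(01)^∞`. -/
noncomputable def bambooTheta (q1 q00 : ℕ → Bool → ℝ≥0∞) (qinf : Bool → ℝ≥0∞)
    (s : L) (b : Bool) : ℝ≥0∞ :=
  if h : ∃ n, s ∈ cylRev (pow01 n ++ [true]) then q1 h.choose b
  else if h : ∃ n, s ∈ cylRev (pow01 n ++ [false, false]) then q00 h.choose b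
  else qinf b

/-- Probability that, starting from the past `s`, the bamboo chain emits the
letters of the word `v` (in chronological order) during its next `|v|` steps. -/
noncomputable def bambooWordProb (q1 q00 : ℕ → Bool → ℝ≥0∞) (qinf : Bool → ℝ≥0∞) :
    L → List Bool → ℝ≥0∞
  | _, [] => 1
  | s, b :: v =>
      bambooTheta q1 q00 qinf s b * bambooWordProb q1 q00 qinf (extend b s) v

/-- The canonical past ending with the finite word `v`. -/
def pastOfWord (v : List Bool) : L := fun i => v.reverse.getD i false

/-- `q_c⁽ʲ⁾(u) = P(X_{j-|u|+1} … X_j = u | X_{-(|c|-1)} … X_0 = c̄)` : the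
conditional probability that the letters emitted at times `j-|u|+1, …, j` form
the word `u`, given a past; the intermediate letters are summed out. -/
noncomputable def qcondB (q1 q00 : ℕ → Bool → ℝ≥0∞) (qinf : Bool → ℝ≥0∞)
    (past : L) (j : ℕ) (u : List Bool) : ℝ≥0∞ :=
  ∑ v : Fin (j - u.length) → Bool,
    bambooWordProb q1 q00 qinf past (List.ofFn v ++ u)

/-- `w` occurs at position `t` in the word `v = X₁…X_n` (i.e. `X_{t-k+1}…X_t = w`). -/
def occursAt (w v : List Bool) (t : ℕ) : Bool :=
  decide (w.length ≤ t ∧ t ≤ v.length ∧ (v.take t).drop (t - w.length) = w)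

/-- The `r`-th occurrence of `w` in `v` is at position `t`. -/
def isRthOcc (w v : List Bool) (r t : ℕ) : Bool :=
  occursAt w v t && ((List.range t).countP (occursAt w v) == r - 1)

/-- `P(T_w⁽ʳ⁾ = n)` : the probability (under the stationary chain, expressed
through the stationary measure of cylinders) that the `r`-th occurrence of `w`
in `X₁ X₂ …` ends at position `n`. -/
noncomputable def probOcc (π : Measure L) (w : List Bool) (r n : ℕ) : ℝ :=
  ∑ v : Fin n → Bool,
    if isRthOcc w (List.ofFn v) r n then (π (cyl (List.ofFn v))).toReal else 0

/-- The generating function `Φ_w⁽ʳ⁾(x) = ∑ₙ P(T_w⁽ʳ⁾ = n) xⁿ`. -/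
noncomputable def genFun (π : Measure L) (w : List Bool) (r : ℕ) (x : ℝ) : ℝ :=
  ∑' n : ℕ, probOcc π w r n * x ^ n

/-- The (generalized probabilized) autocorrelation polynomial `C_w(x)`,
conditioning on the given past. -/
noncomputable def CwB (q1 q00 : ℕ → Bool → ℝ≥0∞) (qinf : Bool → ℝ≥0∞)
    (past : L) (w : List Bool) (x : ℝ) : ℝ :=
  1 + ∑ j ∈ Finset.Ico 1 w.length,
    (if w.drop j = w.take (w.length - j) then
       (qcondB q1 q00 qinf past j (w.drop (w.length - j))).toReal * x ^ j
     else 0)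

/-- `S_w(x) = C_w(x) + ∑_{j ≥ k} q⁽ʲ⁾(w) xʲ`, conditioning on the given past. -/
noncomputable def SwB (q1 q00 : ℕ → Bool → ℝ≥0∞) (qinf : Bool → ℝ≥0∞)
    (past : L) (w : List Bool) (x : ℝ) : ℝ :=
  CwB q1 q00 qinf past w x
    + ∑' j : ℕ, (qcondB q1 q00 qinf past (w.length + j) w).toReal
        * x ^ (w.length + j)

section Contexts

lemma mem_cylRev_append {s : L} {u u' : List Bool} :
    s ∈ cylRev (u ++ u') ↔ s ∈ cylRev u ∧ (fun i => s (u.length + i)) ∈ cylRev u' := by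
  simp only [cylRev, Set.mem_ofPred_eq, List.length_append]
  constructor
  · intro h
    refine ⟨fun i hi => by rw [h i (by omega), List.getD_append _ _ _ _ hi], fun i hi => ?_⟩
    rw [h _ (by omega), List.getD_append_right _ _ _ _ (by omega), Nat.add_sub_cancel_left]
  · rintro ⟨h, h'⟩ i hi
    rcases Nat.lt_or_ge i u.length with hlt | hge
    · rw [h i hlt, List.getD_append _ _ _ _ hlt]
    · obtain ⟨j, rfl⟩ := Nat.exists_eq_add_of_le hge
      rw [h' j (by omega), List.getD_append_right _ _ _ _ hge, Nat.add_sub_cancel_left]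

lemma mem_cylRev_singleton {s : L} {b : Bool} : s ∈ cylRev [b] ↔ s 0 = b := by
  simp [cylRev]

lemma mem_cylRev_pair {s : L} {b c : Bool} : s ∈ cylRev [b, c] ↔ s 0 = b ∧ s 1 = c := by
  simp [cylRev, Nat.le_one_iff_eq_zero_or_eq_one, or_imp, forall_and]

lemma pow01_length (n : ℕ) : (pow01 n).length = 2 * n := by
  induction n with
  | zero => rfl
  | succ n ih => simp [pow01, ih]; ring

lemma pow01_getD {n i : ℕ} (hi : i < 2 * n) : (pow01 n).getD i false = altSeq i := by
  induction n generalizing i with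
  | zero => omega
  | succ n ih =>
    match i with
    | 0 => rfl
    | 1 => rfl
    | i + 2 =>
      rw [show (pow01 (n + 1)).getD (i + 2) false = (pow01 n).getD i false from rfl,
        ih (by omega)]
      simp [altSeq, Nat.add_mod_right]

lemma mem_cylRev_pow01 {s : L} {n : ℕ} : s ∈ cylRev (pow01 n) ↔ ∀ i < 2 * n, s i = altSeq i := by
  simp only [cylRev, Set.mem_ofPred_eq, pow01_length]
  exact forall₂_congr fun i hi => by rw [pow01_getD hi]

lemma altSeq_two_mul (n : ℕ) : altSeq (2 * n) = false := by simp [altSeq]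

lemma altSeq_two_mul_add_one (n : ℕ) : altSeq (2 * n + 1) = true := by simp [altSeq]

lemma altSeq_succ (m : ℕ) : altSeq (m + 1) = !altSeq m := by
  rcases Nat.even_or_odd' m with ⟨n, rfl | rfl⟩
  · simp [altSeq_two_mul, altSeq_two_mul_add_one]
  · rw [show 2 * n + 1 + 1 = 2 * (n + 1) by ring, altSeq_two_mul, altSeq_two_mul_add_one]; rfl

lemma isLeast_mismatch_iff {s : L} {m : ℕ} :
    IsLeast {i | s i ≠ altSeq i} m ↔ (∀ i < m, s i = altSeq i) ∧ s m ≠ altSeq m := by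
  refine ⟨fun h => ⟨fun i hi => ?_, h.1⟩, fun h => ⟨h.2, fun i hi => ?_⟩⟩
  · by_contra hne
    exact absurd (h.2 hne) (by omega)
  · by_contra hlt
    exact hi (h.1 i (by omega))

lemma exists_isLeast_mismatch {s : L} (h : ∃ i, s i ≠ altSeq i) :
    ∃ m, IsLeast {i | s i ≠ altSeq i} m :=
  ⟨sInf _, Nat.sInf_mem h, fun _ hi => Nat.sInf_le hi⟩

lemma mem_cylRev_ctx1_iff {s : L} {n : ℕ} :
    s ∈ cylRev (pow01 n ++ [true]) ↔ IsLeast {i | s i ≠ altSeq i} (2 * n) := by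
  simp [isLeast_mismatch_iff, mem_cylRev_append, mem_cylRev_pow01, pow01_length,
    mem_cylRev_singleton, altSeq_two_mul]

lemma mem_cylRev_ctx00_iff {s : L} {n : ℕ} :
    s ∈ cylRev (pow01 n ++ [false, false]) ↔ IsLeast {i | s i ≠ altSeq i} (2 * n + 1) := by
  rw [isLeast_mismatch_iff, Nat.forall_lt_succ_right]
  simp [mem_cylRev_append, mem_cylRev_pow01, pow01_length, mem_cylRev_pair, altSeq_two_mul,
    altSeq_two_mul_add_one, and_assoc]

end Contexts

section Cylinders

lemma mem_cyl_iff {s : L} {v : List Bool} :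
    s ∈ cyl v ↔ ∀ i < v.length, s i = v.reverse.getD i false := by
  simp [cyl, cylRev]

lemma pastOfWord_mem_cyl (v : List Bool) : pastOfWord v ∈ cyl v := fun _ _ => rfl

lemma mem_cyl_append {s : L} {a v : List Bool} :
    s ∈ cyl (a ++ v) ↔ s ∈ cyl v ∧ (fun i => s (v.length + i)) ∈ cyl a := by
  rw [cyl, List.reverse_append, mem_cylRev_append, List.length_reverse]
  rfl

lemma cyl_nil : cyl [] = Set.univ := by
  simp [cyl, cylRev]

lemma cyl_subset_of_suffix {u v : List Bool} (h : v <:+ u) : cyl u ⊆ cyl v := by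
  obtain ⟨a, rfl⟩ := h
  exact fun s hs => (mem_cyl_append.1 hs).1

lemma extend_mem_cyl_append {b c : Bool} {s : L} {v : List Bool} :
    extend c s ∈ cyl (v ++ [b]) ↔ c = b ∧ s ∈ cyl v := by
  have hs : (fun i => extend c s (1 + i)) = s := funext fun i => by rw [add_comm]; rfl
  rw [mem_cyl_append, List.length_singleton, hs]
  simp [cyl, mem_cylRev_singleton, extend]

lemma extend_pastOfWord (b : Bool) (v : List Bool) :
    extend b (pastOfWord v) = pastOfWord (v ++ [b]) := by
  funext i
  cases i <;> simp [extend, pastOfWord]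

lemma measurableSet_cyl (v : List Bool) : MeasurableSet (cyl v) := by
  simp only [cyl, cylRev, Set.ofPred_forall]
  exact .iInter fun i => .iInter fun _ => measurableSet_eq_fun (measurable_pi_apply i)
    measurable_const

lemma measure_cyl_false_cons_add_true_cons (π : Measure L) (u : List Bool) :
    π (cyl (false :: u)) + π (cyl (true :: u)) = π (cyl u) := by
  have hcons : ∀ b, cyl (b :: u) = cyl u ∩ {s | s u.length = b} := fun b => by
    ext s
    rw [← List.singleton_append, mem_cyl_append]
    simp [cyl, mem_cylRev_singleton]
  have hunion : cyl (false :: u) ∪ cyl (true :: u) = cyl u := by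
    ext s
    simp only [hcons, ← Set.inter_union_distrib_left, Set.mem_inter_iff, Set.mem_union,
      Set.mem_ofPred_eq]
    exact and_iff_left (Bool.eq_false_or_eq_true _).symm
  have hdisj : Disjoint (cyl (false :: u)) (cyl (true :: u)) := by
    simp only [hcons, Set.disjoint_left]
    intro s h1 h2
    simp_all
  rw [← measure_union hdisj (measurableSet_cyl _), hunion]

end Cylinders

def HasStutter (v : List Bool) : Prop := ∃ b, [b, b] <:+: v

lemma HasStutter.mono {u v : List Bool} (h : HasStutter v) (hvu : v <:+: u) : HasStutter u :=
  h.imp fun _ hb => hb.trans hvu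

lemma HasStutter.two_le_length {v : List Bool} (hv : HasStutter v) : 2 ≤ v.length :=
  hv.elim fun _ h => h.length_le

lemma HasStutter.exists_mismatch {v : List Bool} (hv : HasStutter v) {s : L} (hs : s ∈ cyl v) :
    ∃ i < v.length, s i ≠ altSeq i := by
  obtain ⟨b, a, c, rfl⟩ := hv
  rw [List.append_assoc, mem_cyl_append, mem_cyl_append] at hs
  obtain ⟨h0, h1⟩ : s (c.length + 0) = b ∧ s (c.length + 1) = b := by
    simpa [cyl, mem_cylRev_pair] using hs.1.2
  by_cases hb : altSeq c.length = b
  · refine ⟨c.length + 1, by simp; omega, ?_⟩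
    rw [h1, altSeq_succ, hb]
    cases b <;> decide
  · exact ⟨c.length, by simp; omega, fun h => hb (h ▸ h0)⟩

section Words

variable {M : Type*} [AddCommMonoid M]

def words (n : ℕ) : Finset (List Bool) :=
  Finset.univ.image (List.ofFn : (Fin n → Bool) → List Bool)

lemma mem_words {n : ℕ} {l : List Bool} : l ∈ words n ↔ l.length = n := by
  refine ⟨?_, fun h => ?_⟩
  · simp only [words, Finset.mem_image, Finset.mem_univ, true_and]
    rintro ⟨v, rfl⟩
    exact List.length_ofFn
  · subst h
    exact Finset.mem_image.2 ⟨l.get, Finset.mem_univ _, List.ofFn_get l⟩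

lemma sum_fin_eq_sum_words (n : ℕ) (F : List Bool → M) :
    ∑ v : Fin n → Bool, F (List.ofFn v) = ∑ l ∈ words n, F l :=
  (Finset.sum_image fun _ _ _ _ h => List.ofFn_injective h).symm

lemma words_zero : words 0 = {[]} := by
  ext l
  simp [mem_words]

lemma sum_words_one (F : List Bool → M) : ∑ l ∈ words 1, F l = F [false] + F [true] := by
  rw [← sum_fin_eq_sum_words, ← (Equiv.funUnique (Fin 1) Bool).symm.sum_comp]
  simp [add_comm]

lemma sum_words_add (t n : ℕ) (F : List Bool → M) :
    ∑ l ∈ words (t + n), F l = ∑ a ∈ words t, ∑ b ∈ words n, F (a ++ b) := by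
  simp_rw [← sum_fin_eq_sum_words, ← (Fin.appendEquiv t n).sum_comp, Fintype.sum_prod_type]
  simp [Fin.appendEquiv, List.ofFn_fin_append]

lemma sum_words_ite_suffix {w : List Bool} {n : ℕ} (hn : w.length ≤ n) (F : List Bool → M) :
    ∑ v ∈ words n, (if w <:+ v then F v else 0) = ∑ a ∈ words (n - w.length), F (a ++ w) := by
  rw [← Nat.sub_add_cancel hn, sum_words_add, Nat.add_sub_cancel]
  refine Finset.sum_congr rfl fun a _ => ?_
  have hw : ∀ b ∈ words w.length, (w <:+ a ++ b ↔ w = b) := fun b hb =>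
    ⟨fun h => ((List.suffix_of_suffix_length_le h (List.suffix_append a b)
      (mem_words.1 hb).ge).eq_of_length (mem_words.1 hb).symm), fun h => h ▸ List.suffix_append a w⟩
  rw [Finset.sum_congr rfl fun b hb => if_congr (hw b hb) rfl rfl, Finset.sum_ite_eq,
    if_pos (mem_words.2 rfl)]

end Words

lemma sum_measure_cyl_append (π : Measure L) (m : ℕ) (w : List Bool) :
    ∑ a ∈ words m, π (cyl (a ++ w)) = π (cyl w) := by
  induction m with
  | zero => simp [words_zero]
  | succ m ih =>
    rw [add_comm, sum_words_add, Finset.sum_comm, ← ih]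
    simp only [sum_words_one, List.append_assoc, List.cons_append, List.nil_append,
      measure_cyl_false_cons_add_true_cons]

lemma sum_measure_cyl_words (π : Measure L) [IsProbabilityMeasure π] (n : ℕ) :
    ∑ v ∈ words n, π (cyl v) = 1 := by
  simpa [cyl_nil] using sum_measure_cyl_append π n []

lemma sum_words_ite_suffix_measure_cyl (π : Measure L) (w : List Bool) (n : ℕ) :
    ∑ v ∈ words n, (if w <:+ v then π (cyl v) else 0)
      = if w.length ≤ n then π (cyl w) else 0 := by
  split_ifs with h
  · rw [sum_words_ite_suffix h, sum_measure_cyl_append]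
  · exact Finset.sum_eq_zero fun v hv => if_neg fun hw => h (mem_words.1 hv ▸ hw.length_le)

def IsFirstReturn (w u : List Bool) : Prop :=
  u ≠ [] ∧ w <:+ w ++ u ∧ ∀ t, 0 < t → t < u.length → ¬ w <:+ w ++ u.take t

section Occurrences

variable {w : List Bool}

lemma suffix_append_iff_of_length_le {c l : List Bool} (h : w.length ≤ l.length) :
    w <:+ c ++ l ↔ w <:+ l :=
  ⟨fun hw => List.suffix_of_suffix_length_le hw (List.suffix_append c l) h,
    fun hw => hw.trans (List.suffix_append c l)⟩

lemma suffix_iff_suffix_append_drop {v : List Bool} {t : ℕ} (h : w <:+ v.take t) :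
    w <:+ v ↔ w <:+ w ++ v.drop t := by
  obtain ⟨c, hc⟩ := h
  conv_lhs => rw [← List.take_append_drop t v, ← hc, List.append_assoc]
  exact suffix_append_iff_of_length_le (by simp)

lemma occursAt_iff {v : List Bool} {t : ℕ} :
    occursAt w v t = true ↔ t ≤ v.length ∧ w <:+ v.take t := by
  rw [occursAt, decide_eq_true_iff]
  constructor
  · rintro ⟨-, ht, h⟩
    exact ⟨ht, List.suffix_iff_eq_drop.2 (by rw [List.length_take_of_le ht]; exact h.symm)⟩
  · rintro ⟨ht, h⟩
    have hdrop := List.suffix_iff_eq_drop.1 h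
    rw [List.length_take_of_le ht] at hdrop
    exact ⟨by simpa [ht] using h.length_le, ht, hdrop.symm⟩

lemma occursAt_take {v : List Bool} {s t : ℕ} (h : s ≤ t) :
    occursAt w (v.take t) s = occursAt w v s := by
  rw [Bool.eq_iff_iff, occursAt_iff, occursAt_iff, List.take_take, min_eq_left h]
  simp [h]

lemma occursAt_length {v : List Bool} : occursAt w v v.length = true ↔ w <:+ v := by
  simp [occursAt_iff]

lemma isRthOcc_iff {v : List Bool} {r t : ℕ} :
    isRthOcc w v r t = true ↔
      occursAt w v t = true ∧ (List.range t).countP (occursAt w v) = r - 1 := by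
  simp [isRthOcc]

lemma isRthOcc_take {v : List Bool} {r t : ℕ} : isRthOcc w (v.take t) r t = isRthOcc w v r t := by
  simp only [isRthOcc, occursAt_take le_rfl]
  congr 2
  exact List.countP_congr fun s hs => by rw [occursAt_take (List.mem_range.1 hs).le]

lemma isRthOcc_one_iff {v : List Bool} {t : ℕ} :
    isRthOcc w v 1 t = true ↔ occursAt w v t = true ∧ ∀ s < t, occursAt w v s = false := by
  simp [isRthOcc_iff, List.countP_eq_zero]

lemma suffix_iff_exists_first (v : List Bool) :
    w <:+ v ↔ ∃ t ≤ v.length, isRthOcc w (v.take t) 1 t = true ∧ w <:+ w ++ v.drop t := by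
  simp only [isRthOcc_take, isRthOcc_one_iff]
  constructor
  · intro h
    have hex : ∃ t, occursAt w v t = true := ⟨v.length, occursAt_length.2 h⟩
    obtain ⟨ht, hwt⟩ := occursAt_iff.1 (Nat.find_spec hex)
    refine ⟨Nat.find hex, ht, ⟨Nat.find_spec hex, fun s hs => ?_⟩,
      (suffix_iff_suffix_append_drop hwt).1 h⟩
    exact Bool.eq_false_iff.2 (Nat.find_min hex hs)
  · rintro ⟨t, -, ⟨hocc, -⟩, h⟩
    exact (suffix_iff_suffix_append_drop (occursAt_iff.1 hocc).2).2 h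

lemma eq_of_isRthOcc_one_take {v : List Bool} {t t' : ℕ} (h : isRthOcc w (v.take t) 1 t = true)
    (h' : isRthOcc w (v.take t') 1 t' = true) : t = t' := by
  simp only [isRthOcc_take, isRthOcc_one_iff] at h h'
  by_contra hne
  rcases Nat.lt_or_gt_of_ne hne with hlt | hlt
  · simp [h'.2 t hlt] at h
  · simp [h.2 t' hlt] at h'

lemma suffix_append_iff_exists_isFirstReturn {u : List Bool} (hu : u ≠ []) :
    w <:+ w ++ u ↔ ∃ t ≤ u.length, IsFirstReturn w (u.take t) ∧ w <:+ w ++ u.drop t := by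
  have hrenew : ∀ t, w <:+ w ++ u.take t → (w <:+ w ++ u ↔ w <:+ w ++ u.drop t) := fun t h => by
    simpa using suffix_iff_suffix_append_drop (v := w ++ u) (t := w.length + t)
      (by rwa [List.take_length_add_append])
  constructor
  · intro h
    have hex : ∃ t, 0 < t ∧ w <:+ w ++ u.take t :=
      ⟨u.length, List.length_pos_of_ne_nil hu, by rwa [List.take_length]⟩
    obtain ⟨hpos, hT⟩ := Nat.find_spec hex
    have hTu : Nat.find hex ≤ u.length :=
      Nat.find_min' hex ⟨List.length_pos_of_ne_nil hu, by rwa [List.take_length]⟩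
    refine ⟨Nat.find hex, hTu, ⟨by simp [List.take_eq_nil_iff, hu], hT, fun s hs hsT => ?_⟩,
      (hrenew _ hT).1 h⟩
    rw [List.length_take_of_le hTu] at hsT
    rw [List.take_take, min_eq_left hsT.le]
    exact fun hs' => Nat.find_min hex hsT ⟨hs, hs'⟩
  · rintro ⟨t, -, ⟨-, ht, -⟩, h⟩
    exact (hrenew t ht).2 h

lemma eq_of_isFirstReturn_take {u : List Bool} {t t' : ℕ} (ht : t ≤ u.length)
    (ht' : t' ≤ u.length) (h : IsFirstReturn w (u.take t)) (h' : IsFirstReturn w (u.take t')) :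
    t = t' := by
  have hnlt : ∀ {t t'}, t' ≤ u.length → IsFirstReturn w (u.take t) →
      IsFirstReturn w (u.take t') → ¬ t < t' := fun {t t'} ht' h h' hlt => by
    have hpos : 0 < t := Nat.pos_of_ne_zero fun h0 => h.1 (by simp [h0])
    apply h'.2.2 t hpos (by rwa [List.length_take_of_le ht'])
    rw [List.take_take, min_eq_left hlt.le]
    exact h.2.1
  exact le_antisymm (not_lt.1 (hnlt ht h' h)) (not_lt.1 (hnlt ht' h h'))

lemma countP_range_eq_of_last {p : ℕ → Bool} {t n : ℕ} (htn : t < n)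
    (h : ∀ s, t < s → s < n → p s = false) :
    (List.range n).countP p = (List.range t).countP p + if p t then 1 else 0 := by
  induction n, htn using Nat.le_induction with
  | base => rw [List.range_succ, List.countP_append, List.countP_singleton]
  | succ n hn ih =>
    rw [List.range_succ, List.countP_append, ih fun s h1 h2 => h s h1 (by omega),
      List.countP_singleton, h n hn (by omega)]
    simp

lemma isFirstReturn_drop_iff {v : List Bool} {t : ℕ} (h : occursAt w v t = true) :
    IsFirstReturn w (v.drop t) ↔ t < v.length ∧ occursAt w v v.length = true ∧
      ∀ s, t < s → s < v.length → occursAt w v s = false := by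
  obtain ⟨htv, hwt⟩ := occursAt_iff.1 h
  have hshift : ∀ s, occursAt w v (t + s) = true ↔
      s ≤ v.length - t ∧ w <:+ w ++ (v.drop t).take s := by
    intro s
    obtain ⟨c, hc⟩ := hwt
    rw [occursAt_iff, List.take_add, ← hc, List.append_assoc,
      suffix_append_iff_of_length_le (by simp)]
    exact and_congr_left' (by omega)
  unfold IsFirstReturn
  rw [Ne, List.drop_eq_nil_iff, not_le, occursAt_length, ← suffix_iff_suffix_append_drop hwt,
    List.length_drop]
  refine and_congr_right fun _ => and_congr_right fun _ =>
    ⟨fun H s h1 h2 => ?_, fun H s h1 h2 hs => ?_⟩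
  · rw [Bool.eq_false_iff]
    intro hocc
    rw [← Nat.add_sub_cancel' h1.le, hshift] at hocc
    exact H (s - t) (by omega) (by omega) hocc.2
  · exact absurd ((hshift s).2 ⟨by omega, hs⟩) (by simp [H (t + s) (by omega) (by omega)])

lemma isRthOcc_add_two_iff {v : List Bool} {r : ℕ} :
    isRthOcc w v (r + 2) v.length = true ↔
      ∃ t ≤ v.length, isRthOcc w (v.take t) (r + 1) t = true ∧ IsFirstReturn w (v.drop t) := by
  simp only [isRthOcc_take]
  constructor
  · intro h
    obtain ⟨hn, hcount⟩ : occursAt w v v.length = true ∧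
        (List.range v.length).countP (occursAt w v) = r + 1 := isRthOcc_iff.1 h
    obtain ⟨s, hs, hocc⟩ := List.countP_pos_iff.1 (by rw [hcount]; omega)
    rw [List.mem_range] at hs
    set T := Nat.findGreatest (fun s => occursAt w v s = true) (v.length - 1)
    have hT : occursAt w v T = true :=
      Nat.findGreatest_spec (P := fun s => occursAt w v s = true) (by omega : s ≤ v.length - 1) hocc
    have hTn : T < v.length := (Nat.findGreatest_le (v.length - 1)).trans_lt (by omega)
    have hlast : ∀ s, T < s → s < v.length → occursAt w v s = false := fun s h1 h2 =>
      Bool.eq_false_iff.2 (Nat.findGreatest_is_greatest h1 (by omega))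
    have hcountT := countP_range_eq_of_last hTn hlast
    rw [hcount, hT, if_pos rfl] at hcountT
    refine ⟨T, hTn.le, ?_, (isFirstReturn_drop_iff hT).2 ⟨hTn, hn, hlast⟩⟩
    exact isRthOcc_iff.2 ⟨hT, by omega⟩
  · rintro ⟨t, -, ht, hfr⟩
    obtain ⟨hocc, hcount⟩ : occursAt w v t = true ∧
        (List.range t).countP (occursAt w v) = r := isRthOcc_iff.1 ht
    obtain ⟨htn, hn, hlast⟩ := (isFirstReturn_drop_iff hocc).1 hfr
    exact isRthOcc_iff.2 ⟨hn, by simp [countP_range_eq_of_last htn hlast, hcount, hocc]⟩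

lemma eq_of_isRthOcc_take_of_isFirstReturn_drop {v : List Bool} {r t t' : ℕ}
    (h : isRthOcc w (v.take t) r t = true ∧ IsFirstReturn w (v.drop t))
    (h' : isRthOcc w (v.take t') r t' = true ∧ IsFirstReturn w (v.drop t')) : t = t' := by
  have hnlt : ∀ {t t'}, isRthOcc w (v.take t) r t = true ∧ IsFirstReturn w (v.drop t) →
      isRthOcc w (v.take t') r t' = true ∧ IsFirstReturn w (v.drop t') → ¬ t < t' :=
    fun {t t'} h h' hlt => by
      rw [isRthOcc_take] at h h'
      have hocc' := (isRthOcc_iff.1 h'.1).1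
      obtain ⟨-, -, hlast⟩ := (isFirstReturn_drop_iff (isRthOcc_iff.1 h.1).1).1 h.2
      obtain ⟨htn', -, -⟩ := (isFirstReturn_drop_iff hocc').1 h'.2
      simp [hlast t' hlt htn'] at hocc'
  exact le_antisymm (not_lt.1 (hnlt h' h)) (not_lt.1 (hnlt h h'))

lemma suffix_append_iff_of_length_lt {u : List Bool} {j : ℕ} (hu : u.length = j)
    (hj : j < w.length) :
    w <:+ w ++ u ↔ w.drop j = w.take (w.length - j) ∧ u = w.drop (w.length - j) := by
  rw [List.suffix_iff_eq_drop, List.length_append, hu, Nat.add_sub_cancel_left,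
    List.drop_append_of_le_length hj.le]
  constructor
  · intro h
    have h' : w.take (w.length - j) ++ w.drop (w.length - j) = w.drop j ++ u := by
      rw [List.take_append_drop]
      exact h
    obtain ⟨h1, h2⟩ := List.append_inj h' (by simp)
    exact ⟨h1.symm, h2.symm⟩
  · rintro ⟨h1, h2⟩
    rw [h2, h1, List.take_append_drop]

end Occurrences

lemma ite_eq_sum_range_ite {M : Type*} [AddCommMonoid M] {Q : Prop} [Decidable Q]
    {P : ℕ → Prop} [DecidablePred P] {n : ℕ} (hQ : Q ↔ ∃ t ≤ n, P t)
    (huniq : ∀ t ≤ n, ∀ t' ≤ n, P t → P t' → t = t') (c : M) :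
    (if Q then c else 0) = ∑ t ∈ Finset.range (n + 1), if P t then c else 0 := by
  by_cases hq : Q
  · obtain ⟨T, hTn, hT⟩ := hQ.1 hq
    rw [if_pos hq, Finset.sum_eq_single_of_mem T (Finset.mem_range.2 (by omega)) fun t ht hne =>
      if_neg fun hP => hne (huniq t (Nat.lt_succ_iff.1 (Finset.mem_range.1 ht)) T hTn hP hT),
      if_pos hT]
  · rw [if_neg hq, Finset.sum_eq_zero fun t ht => if_neg fun hP =>
      hq (hQ.2 ⟨t, Nat.lt_succ_iff.1 (Finset.mem_range.1 ht), hP⟩)]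

lemma sum_words_ite_eq_sum_mul {n : ℕ} {Q : List Bool → Prop} [DecidablePred Q]
    {A : ℕ → List Bool → Prop} [∀ t, DecidablePred (A t)] {B : List Bool → Prop}
    [DecidablePred B] {μ ν : List Bool → ℝ≥0∞}
    (hQ : ∀ v ∈ words n, Q v ↔ ∃ t ≤ n, A t (v.take t) ∧ B (v.drop t))
    (huniq : ∀ v ∈ words n, ∀ t ≤ n, ∀ t' ≤ n,
      A t (v.take t) ∧ B (v.drop t) → A t' (v.take t') ∧ B (v.drop t') → t = t')
    (hμ : ∀ a b, A a.length a → μ (a ++ b) = μ a * ν b) :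
    ∑ v ∈ words n, (if Q v then μ v else 0)
      = ∑ t ∈ Finset.range (n + 1), (∑ a ∈ words t, if A t a then μ a else 0)
          * ∑ b ∈ words (n - t), if B b then ν b else 0 := by
  rw [Finset.sum_congr rfl fun v hv => ite_eq_sum_range_ite (hQ v hv) (huniq v hv) (μ v),
    Finset.sum_comm]
  refine Finset.sum_congr rfl fun t ht => ?_
  have htn : t ≤ n := Nat.lt_succ_iff.1 (Finset.mem_range.1 ht)
  rw [← Nat.add_sub_cancel' htn, sum_words_add, Nat.add_sub_cancel_left, Finset.sum_mul_sum]
  refine Finset.sum_congr rfl fun a ha => Finset.sum_congr rfl fun b _ => ?_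
  rw [mem_words] at ha
  rw [← ha, List.take_left, List.drop_left]
  by_cases hA : A a.length a <;> by_cases hB : B b <;> simp [hA, hB, hμ a b]

section PowerSeries

variable {x : ℝ}

lemma summable_norm_toReal_mul_pow {a : ℕ → ℝ≥0∞} (ha : ∀ n, a n ≤ 1) (hx : |x| < 1) :
    Summable fun n => ‖(a n).toReal * x ^ n‖ := by
  refine .of_nonneg_of_le (fun _ => norm_nonneg _) (fun n => ?_)
    (summable_geometric_of_lt_one (abs_nonneg x) hx)
  rw [norm_mul, norm_pow, Real.norm_eq_abs, Real.norm_eq_abs, abs_of_nonneg ENNReal.toReal_nonneg]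
  exact mul_le_of_le_one_left (by positivity) (ENNReal.toReal_le_of_le_ofReal zero_le_one
    (by simpa using ha n))

lemma tsum_toReal_mul_pow_mul {a b : ℕ → ℝ≥0∞} (ha : ∀ n, a n ≤ 1) (hb : ∀ n, b n ≤ 1)
    (hx : |x| < 1) :
    (∑' n, (a n).toReal * x ^ n) * (∑' n, (b n).toReal * x ^ n)
      = ∑' n, (∑ t ∈ Finset.range (n + 1), a t * b (n - t)).toReal * x ^ n := by
  rw [tsum_mul_tsum_eq_tsum_sum_range_of_summable_norm (summable_norm_toReal_mul_pow ha hx)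
    (summable_norm_toReal_mul_pow hb hx)]
  refine tsum_congr fun n => ?_
  rw [ENNReal.toReal_sum fun t _ => ENNReal.mul_ne_top
    (ne_top_of_le_ne_top ENNReal.one_ne_top (ha t)) (ne_top_of_le_ne_top ENNReal.one_ne_top (hb _)),
    Finset.sum_mul]
  refine Finset.sum_congr rfl fun t ht => ?_
  rw [ENNReal.toReal_mul, ← pow_mul_pow_sub x (Nat.lt_succ_iff.1 (Finset.mem_range.1 ht))]
  ring

lemma tsum_toReal_mul_pow_of_conv_eq_ite {a b : ℕ → ℝ≥0∞} (ha : ∀ n, a n ≤ 1) (hb : ∀ n, b n ≤ 1)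
    (hx : |x| < 1) {c : ℝ≥0∞} {k : ℕ}
    (hab : ∀ n, ∑ t ∈ Finset.range (n + 1), a t * b (n - t) = if k ≤ n then c else 0) :
    (∑' n, (a n).toReal * x ^ n) * (∑' n, (b n).toReal * x ^ n) = x ^ k * c.toReal / (1 - x) := by
  have hgeom := (hasSum_geometric_of_norm_lt_one (by rwa [Real.norm_eq_abs])).mul_left
    (x ^ k * c.toReal)
  have hsum : HasSum (fun n => (if k ≤ n then c else 0).toReal * x ^ n)
      (x ^ k * c.toReal * (1 - x)⁻¹) := by
    have hinit : ∑ i ∈ Finset.range k, (if k ≤ i then c else 0).toReal * x ^ i = 0 :=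
      Finset.sum_eq_zero fun i hi => by simp [(Finset.mem_range.1 hi).not_ge]
    rw [← hasSum_nat_add_iff' k, hinit, sub_zero]
    simpa [pow_add, mul_comm, mul_assoc, mul_left_comm] using hgeom
  rw [tsum_toReal_mul_pow_mul ha hb hx, tsum_congr fun n => by rw [hab], hsum.tsum_eq,
    div_eq_mul_inv]

lemma tsum_toReal_mul_pow_renewal {f g : ℕ → ℝ≥0∞} (hf : ∀ n, f n ≤ 1) (hg : ∀ n, g n ≤ 1)
    (hx : |x| < 1) (hf0 : f 0 = 0) (hg0 : g 0 = 1)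
    (hfg : ∀ n, 0 < n → g n = ∑ t ∈ Finset.range (n + 1), f t * g (n - t)) :
    (∑' n, (f n).toReal * x ^ n) * (∑' n, (g n).toReal * x ^ n)
      = (∑' n, (g n).toReal * x ^ n) - 1 := by
  have hconv : ∀ n, (∑ t ∈ Finset.range (n + 1), f t * g (n - t)).toReal * x ^ n
      = (g n).toReal * x ^ n - if n = 0 then 1 else 0 := by
    rintro (_ | n)
    · simp [hf0, hg0]
    · rw [← hfg _ n.succ_pos]
      simp
  rw [tsum_toReal_mul_pow_mul hf hg hx, tsum_congr hconv,
    Summable.tsum_sub (summable_norm_toReal_mul_pow hg hx).of_norm (hasSum_ite_eq 0 1).summable,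
    tsum_ite_eq]

theorem tsum_occurrence_identities {P : ℕ → ℕ → ℝ≥0∞} {f g : ℕ → ℝ≥0∞} {c : ℝ≥0∞} {k : ℕ}
    (hP : ∀ r n, P r n ≤ 1) (hf : ∀ n, f n ≤ 1) (hg : ∀ n, g n ≤ 1) (hx : |x| < 1)
    (hPg : ∀ n, ∑ t ∈ Finset.range (n + 1), P 1 t * g (n - t) = if k ≤ n then c else 0)
    (hf0 : f 0 = 0) (hg0 : g 0 = 1)
    (hfg : ∀ n, 0 < n → g n = ∑ t ∈ Finset.range (n + 1), f t * g (n - t))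
    (hPf : ∀ r n, P (r + 2) n = ∑ t ∈ Finset.range (n + 1), P (r + 1) t * f (n - t)) :
    ∑' n, (P 1 n).toReal * x ^ n = x ^ k * c.toReal / ((1 - x) * ∑' n, (g n).toReal * x ^ n) ∧
    ∀ r, 1 ≤ r → ∑' n, (P r n).toReal * x ^ n
      = (∑' n, (P 1 n).toReal * x ^ n) * (1 - 1 / ∑' n, (g n).toReal * x ^ n) ^ (r - 1) := by
  set G := ∑' n, (g n).toReal * x ^ n
  set F := ∑' n, (f n).toReal * x ^ n
  have hFG : F * G = G - 1 := tsum_toReal_mul_pow_renewal hf hg hx hf0 hg0 hfg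
  have hG : G ≠ 0 := fun h => by simp [h] at hFG
  have hF : F = 1 - 1 / G := by rw [one_sub_div hG, eq_div_iff hG, hFG]
  have h1x : 1 - x ≠ 0 := sub_ne_zero.2 (ne_of_gt (abs_lt.1 hx).2)
  have hΦ : ∀ r, ∑' n, (P (r + 1) n).toReal * x ^ n = (∑' n, (P 1 n).toReal * x ^ n) * F ^ r := by
    intro r
    induction r with
    | zero => simp
    | succ r ih =>
      rw [pow_succ, ← mul_assoc, ← ih, tsum_toReal_mul_pow_mul (hP _) hf hx]
      exact tsum_congr fun n => by rw [← hPf]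
  refine ⟨?_, fun r hr => ?_⟩
  · have h := tsum_toReal_mul_pow_of_conv_eq_ite (hP 1) hg hx hPg
    rw [eq_div_iff h1x] at h
    rw [eq_div_iff (mul_ne_zero h1x hG)]
    linear_combination h
  · obtain ⟨r, rfl⟩ := Nat.exists_eq_add_of_le' hr
    rw [hΦ, hF, Nat.add_sub_cancel]

end PowerSeries

noncomputable def occProb (π : Measure L) (w : List Bool) (r n : ℕ) : ℝ≥0∞ :=
  ∑ v ∈ words n, if isRthOcc w v r n then π (cyl v) else 0

lemma occProb_le_one (π : Measure L) [IsProbabilityMeasure π] (w : List Bool) (r n : ℕ) :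
    occProb π w r n ≤ 1 :=
  sum_measure_cyl_words π n ▸ Finset.sum_le_sum fun _ _ => by split_ifs <;> simp

lemma genFun_eq_tsum_occProb (π : Measure L) [IsFiniteMeasure π] (w : List Bool) (r : ℕ)
    (x : ℝ) : genFun π w r x = ∑' n, (occProb π w r n).toReal * x ^ n := by
  refine tsum_congr fun n => ?_
  rw [probOcc, occProb, sum_fin_eq_sum_words n fun v => if isRthOcc w v r n then
    (π (cyl v)).toReal else 0, ENNReal.toReal_sum fun v _ => by split_ifs <;> simp]
  congr 1
  exact Finset.sum_congr rfl fun v _ => by split_ifs <;> simp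

noncomputable def returnProb (q1 q00 : ℕ → Bool → ℝ≥0∞) (qinf : Bool → ℝ≥0∞)
    (z w : List Bool) (j : ℕ) : ℝ≥0∞ :=
  ∑ u ∈ words j, if w <:+ w ++ u then bambooWordProb q1 q00 qinf (pastOfWord z) u else 0

noncomputable def firstReturnProb (q1 q00 : ℕ → Bool → ℝ≥0∞) (qinf : Bool → ℝ≥0∞)
    (z w : List Bool) (j : ℕ) : ℝ≥0∞ :=
  ∑ u ∈ words j, if IsFirstReturn w u then bambooWordProb q1 q00 qinf (pastOfWord z) u else 0

section Bamboo

variable {q1 q00 : ℕ → Bool → ℝ≥0∞} {qinf : Bool → ℝ≥0∞} {κ : Kernel L L} {π : Measure L}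
  {z w : List Bool}

lemma bambooTheta_of_mem_ctx1 {s : L} {n : ℕ} (h : s ∈ cylRev (pow01 n ++ [true])) :
    bambooTheta q1 q00 qinf s = q1 n := by
  have hex : ∃ m, s ∈ cylRev (pow01 m ++ [true]) := ⟨n, h⟩
  have hn : hex.choose = n := by
    have := (mem_cylRev_ctx1_iff.1 hex.choose_spec).unique (mem_cylRev_ctx1_iff.1 h)
    omega
  funext b
  simp only [bambooTheta, dif_pos hex, hn]

lemma bambooTheta_of_mem_ctx00 {s : L} {n : ℕ} (h : s ∈ cylRev (pow01 n ++ [false, false])) :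
    bambooTheta q1 q00 qinf s = q00 n := by
  have hne : ¬ ∃ m, s ∈ cylRev (pow01 m ++ [true]) := fun ⟨m, hm⟩ => by
    have := (mem_cylRev_ctx1_iff.1 hm).unique (mem_cylRev_ctx00_iff.1 h)
    omega
  have hex : ∃ m, s ∈ cylRev (pow01 m ++ [false, false]) := ⟨n, h⟩
  have hn : hex.choose = n := by
    have := (mem_cylRev_ctx00_iff.1 hex.choose_spec).unique (mem_cylRev_ctx00_iff.1 h)
    omega
  funext b
  simp only [bambooTheta, dif_neg hne, dif_pos hex, hn]

lemma bambooTheta_altSeq : bambooTheta q1 q00 qinf altSeq = qinf := by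
  have h1 : ¬ ∃ m, altSeq ∈ cylRev (pow01 m ++ [true]) := fun ⟨_, hm⟩ =>
    (mem_cylRev_ctx1_iff.1 hm).1 rfl
  have h00 : ¬ ∃ m, altSeq ∈ cylRev (pow01 m ++ [false, false]) := fun ⟨_, hm⟩ =>
    (mem_cylRev_ctx00_iff.1 hm).1 rfl
  funext b
  simp only [bambooTheta, dif_neg h1, dif_neg h00]

lemma bambooTheta_add_bambooTheta (hq1 : ∀ n, q1 n false + q1 n true = 1)
    (hq00 : ∀ n, q00 n false + q00 n true = 1) (hqinf : qinf false + qinf true = 1) (s : L) :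
    bambooTheta q1 q00 qinf s false + bambooTheta q1 q00 qinf s true = 1 := by
  unfold bambooTheta
  split_ifs
  exacts [hq1 _, hq00 _, hqinf]

lemma bambooTheta_congr {s s' : L} {N : ℕ} (hss' : ∀ i < N, s i = s' i)
    (hmis : ∃ i < N, s i ≠ altSeq i) :
    bambooTheta q1 q00 qinf s = bambooTheta q1 q00 qinf s' := by
  obtain ⟨m, hs⟩ := exists_isLeast_mismatch (hmis.imp fun _ h => h.2)
  have hmN : m < N := by
    obtain ⟨i, hi, h⟩ := hmis
    exact (hs.2 h).trans_lt hi
  have hs' : IsLeast {i | s' i ≠ altSeq i} m := by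
    rw [isLeast_mismatch_iff] at hs ⊢
    exact ⟨fun i hi => hss' i (by omega) ▸ hs.1 i hi, hss' m hmN ▸ hs.2⟩
  rcases Nat.even_or_odd' m with ⟨n, rfl | rfl⟩
  · rw [bambooTheta_of_mem_ctx1 (mem_cylRev_ctx1_iff.2 hs),
      bambooTheta_of_mem_ctx1 (mem_cylRev_ctx1_iff.2 hs')]
  · rw [bambooTheta_of_mem_ctx00 (mem_cylRev_ctx00_iff.2 hs),
      bambooTheta_of_mem_ctx00 (mem_cylRev_ctx00_iff.2 hs')]

lemma bambooTheta_eq_of_mem_cyl {v : List Bool} (hv : HasStutter v) {s : L} (hs : s ∈ cyl v) :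
    bambooTheta q1 q00 qinf s = bambooTheta q1 q00 qinf (pastOfWord v) :=
  bambooTheta_congr (fun i hi => mem_cyl_iff.1 hs i hi) (hv.exists_mismatch hs)

lemma IsBambooKernel.apply (hκ : IsBambooKernel q1 q00 qinf κ) (s : L) :
    κ s = bambooTheta q1 q00 qinf s false • Measure.dirac (extend false s)
      + bambooTheta q1 q00 qinf s true • Measure.dirac (extend true s) := by
  by_cases hex : ∃ i, s i ≠ altSeq i
  · obtain ⟨m, hm⟩ := exists_isLeast_mismatch hex
    rcases Nat.even_or_odd' m with ⟨n, rfl | rfl⟩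
    · have h := mem_cylRev_ctx1_iff.2 hm
      rw [bambooTheta_of_mem_ctx1 h]
      exact hκ.1 n s h
    · have h := mem_cylRev_ctx00_iff.2 hm
      rw [bambooTheta_of_mem_ctx00 h]
      exact hκ.2.1 n s h
  · obtain rfl : s = altSeq := funext fun i => not_not.1 fun h => hex ⟨i, h⟩
    rw [bambooTheta_altSeq]
    exact hκ.2.2

lemma IsBambooKernel.apply_cyl_append (hκ : IsBambooKernel q1 q00 qinf κ)
    (s : L) (v : List Bool) (b : Bool) :
    κ s (cyl (v ++ [b])) = (cyl v).indicator (fun s => bambooTheta q1 q00 qinf s b) s := by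
  rw [hκ.apply s]
  cases b <;> by_cases hs : s ∈ cyl v <;>
    simp [Measure.dirac_apply' _ (measurableSet_cyl _), extend_mem_cyl_append, hs]

lemma measure_cyl_append_singleton (hκ : IsBambooKernel q1 q00 qinf κ) (hπ : IsStationary κ π)
    {v : List Bool} (hv : HasStutter v) (b : Bool) :
    π (cyl (v ++ [b])) = bambooTheta q1 q00 qinf (pastOfWord v) b * π (cyl v) := by
  rw [hπ _ (measurableSet_cyl _)]
  simp_rw [hκ.apply_cyl_append, lintegral_indicator (measurableSet_cyl v)]
  rw [setLIntegral_congr_fun (measurableSet_cyl v)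
    fun s hs => congrFun (bambooTheta_eq_of_mem_cyl hv hs) b, setLIntegral_const]

lemma measure_cyl_append (hκ : IsBambooKernel q1 q00 qinf κ) (hπ : IsStationary κ π)
    {v : List Bool} (hv : HasStutter v) (u : List Bool) :
    π (cyl (v ++ u)) = bambooWordProb q1 q00 qinf (pastOfWord v) u * π (cyl v) := by
  induction u generalizing v with
  | nil => simp [bambooWordProb]
  | cons b u ih =>
    rw [List.append_cons, ih (hv.mono (List.prefix_append v [b]).isInfix),
      measure_cyl_append_singleton hκ hπ hv, bambooWordProb, extend_pastOfWord]
    ring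

lemma bambooWordProb_append (a b v : List Bool) :
    bambooWordProb q1 q00 qinf (pastOfWord v) (a ++ b)
      = bambooWordProb q1 q00 qinf (pastOfWord v) a
        * bambooWordProb q1 q00 qinf (pastOfWord (v ++ a)) b := by
  induction a generalizing v with
  | nil => simp [bambooWordProb]
  | cons c a ih =>
    rw [List.cons_append, bambooWordProb, bambooWordProb, extend_pastOfWord, ih, mul_assoc,
      List.append_cons v c a]

lemma bambooWordProb_eq_of_mem_cyl {z : List Bool} (hz : HasStutter z) {s : L} (hs : s ∈ cyl z)
    (u : List Bool) :
    bambooWordProb q1 q00 qinf s u = bambooWordProb q1 q00 qinf (pastOfWord z) u := by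
  induction u generalizing s z with
  | nil => rfl
  | cons b u ih =>
    rw [bambooWordProb, bambooWordProb, bambooTheta_eq_of_mem_cyl hz hs, extend_pastOfWord,
      ih (hz.mono (List.prefix_append z [b]).isInfix) (extend_mem_cyl_append.2 ⟨rfl, hs⟩)]

lemma bambooWordProb_of_suffix (hz : HasStutter z) {v : List Bool} (h : z <:+ v) (u : List Bool) :
    bambooWordProb q1 q00 qinf (pastOfWord v) u = bambooWordProb q1 q00 qinf (pastOfWord z) u :=
  bambooWordProb_eq_of_mem_cyl hz (cyl_subset_of_suffix h (pastOfWord_mem_cyl v)) u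

lemma measure_cyl_append_of_suffix (hκ : IsBambooKernel q1 q00 qinf κ) (hπ : IsStationary κ π)
    (hz : HasStutter z) {a : List Bool} (h : z <:+ a) (b : List Bool) :
    π (cyl (a ++ b)) = π (cyl a) * bambooWordProb q1 q00 qinf (pastOfWord z) b := by
  rw [measure_cyl_append hκ hπ (hz.mono h.isInfix), bambooWordProb_of_suffix hz h, mul_comm]

lemma sum_bambooWordProb
    (hθ : ∀ s, bambooTheta q1 q00 qinf s false + bambooTheta q1 q00 qinf s true = 1)
    (n : ℕ) (s : L) : ∑ u ∈ words n, bambooWordProb q1 q00 qinf s u = 1 := by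
  induction n generalizing s with
  | zero => simp [words_zero, bambooWordProb]
  | succ n ih =>
    rw [add_comm, sum_words_add, sum_words_one]
    simp only [List.cons_append, List.nil_append, bambooWordProb, ← Finset.mul_sum, ih, mul_one,
      hθ]

lemma returnProb_zero : returnProb q1 q00 qinf z w 0 = 1 := by
  simp [returnProb, words_zero, bambooWordProb]

lemma firstReturnProb_zero : firstReturnProb q1 q00 qinf z w 0 = 0 := by
  simp [firstReturnProb, words_zero, IsFirstReturn]

lemma returnProb_le_one
    (hθ : ∀ s, bambooTheta q1 q00 qinf s false + bambooTheta q1 q00 qinf s true = 1) (j : ℕ) :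
    returnProb q1 q00 qinf z w j ≤ 1 := by
  refine (Finset.sum_le_sum fun u _ => ?_).trans_eq (sum_bambooWordProb hθ j (pastOfWord z))
  split_ifs <;> simp

lemma firstReturnProb_le_one
    (hθ : ∀ s, bambooTheta q1 q00 qinf s false + bambooTheta q1 q00 qinf s true = 1) (j : ℕ) :
    firstReturnProb q1 q00 qinf z w j ≤ 1 := by
  refine (Finset.sum_le_sum fun u _ => ?_).trans_eq (sum_bambooWordProb hθ j (pastOfWord z))
  split_ifs <;> simp

lemma sum_occProb_one_mul_returnProb (hκ : IsBambooKernel q1 q00 qinf κ) (hπ : IsStationary κ π)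
    (hz : HasStutter z) (hzw : z <:+ w) (n : ℕ) :
    ∑ t ∈ Finset.range (n + 1), occProb π w 1 t * returnProb q1 q00 qinf z w (n - t)
      = if w.length ≤ n then π (cyl w) else 0 := by
  rw [← sum_words_ite_suffix_measure_cyl]
  refine (sum_words_ite_eq_sum_mul (A := fun t a => isRthOcc w a 1 t = true)
    (fun v hv => ?_) (fun v _ t _ t' _ h h' => eq_of_isRthOcc_one_take h.1 h'.1)
    (fun a b ha => measure_cyl_append_of_suffix hκ hπ hz
      (hzw.trans (occursAt_length.1 (isRthOcc_iff.1 ha).1)) b)).symm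
  obtain rfl := mem_words.1 hv
  exact suffix_iff_exists_first v

lemma returnProb_eq_sum (hz : HasStutter z) (hzw : z <:+ w) {j : ℕ} (hj : 0 < j) :
    returnProb q1 q00 qinf z w j
      = ∑ t ∈ Finset.range (j + 1),
          firstReturnProb q1 q00 qinf z w t * returnProb q1 q00 qinf z w (j - t) := by
  refine sum_words_ite_eq_sum_mul (A := fun _ => IsFirstReturn w)
    (fun u hu => ?_) (fun u hu t ht t' ht' h h' => ?_) (fun a b ha => ?_)
  · obtain rfl := mem_words.1 hu
    exact suffix_append_iff_exists_isFirstReturn (List.ne_nil_of_length_pos hj)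
  · obtain rfl := mem_words.1 hu
    exact eq_of_isFirstReturn_take ht ht' h.1 h'.1
  · have hza : z <:+ z ++ a := List.suffix_of_suffix_length_le (hzw.trans ha.2.1)
      (List.suffix_append_self_iff.2 hzw) (by simp)
    rw [bambooWordProb_append, bambooWordProb_of_suffix hz hza]

lemma occProb_add_two (hκ : IsBambooKernel q1 q00 qinf κ) (hπ : IsStationary κ π)
    (hz : HasStutter z) (hzw : z <:+ w) (r n : ℕ) :
    occProb π w (r + 2) n
      = ∑ t ∈ Finset.range (n + 1),
          occProb π w (r + 1) t * firstReturnProb q1 q00 qinf z w (n - t) := by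
  refine sum_words_ite_eq_sum_mul (A := fun t a => isRthOcc w a (r + 1) t = true)
    (fun v hv => ?_) (fun v _ t _ t' _ h h' => eq_of_isRthOcc_take_of_isFirstReturn_drop h h')
    (fun a b ha => measure_cyl_append_of_suffix hκ hπ hz
      (hzw.trans (occursAt_length.1 (isRthOcc_iff.1 ha).1)) b)
  obtain rfl := mem_words.1 hv
  exact isRthOcc_add_two_iff

lemma returnProb_of_lt {j : ℕ} (hj : j < w.length) :
    returnProb q1 q00 qinf z w j
      = if w.drop j = w.take (w.length - j) then
          qcondB q1 q00 qinf (pastOfWord z) j (w.drop (w.length - j)) else 0 := by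
  have hq : qcondB q1 q00 qinf (pastOfWord z) j (w.drop (w.length - j))
      = bambooWordProb q1 q00 qinf (pastOfWord z) (w.drop (w.length - j)) := by
    rw [qcondB, sum_fin_eq_sum_words _ fun m => bambooWordProb q1 q00 qinf (pastOfWord z)
      (m ++ w.drop (w.length - j)), List.length_drop, show j - (w.length - (w.length - j)) = 0 by
      omega, words_zero, Finset.sum_singleton, List.nil_append]
  rw [returnProb, Finset.sum_congr rfl fun u hu =>
    if_congr (suffix_append_iff_of_length_lt (mem_words.1 hu) hj) rfl rfl]
  split_ifs with h
  · simp [h, hq, mem_words, show w.length - (w.length - j) = j by omega]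
  · simp [h]

lemma returnProb_of_le {j : ℕ} (hj : w.length ≤ j) :
    returnProb q1 q00 qinf z w j = qcondB q1 q00 qinf (pastOfWord z) j w := by
  rw [returnProb, Finset.sum_congr rfl fun u hu =>
    if_congr (suffix_append_iff_of_length_le (c := w) ((mem_words.1 hu).symm ▸ hj)) rfl rfl,
    sum_words_ite_suffix hj, qcondB,
    sum_fin_eq_sum_words _ fun a => bambooWordProb q1 q00 qinf (pastOfWord z) (a ++ w)]

lemma tsum_returnProb_eq_SwB
    (hθ : ∀ s, bambooTheta q1 q00 qinf s false + bambooTheta q1 q00 qinf s true = 1)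
    (hw : 1 ≤ w.length) {x : ℝ} (hx : |x| < 1) :
    ∑' j, (returnProb q1 q00 qinf z w j).toReal * x ^ j
      = SwB q1 q00 qinf (pastOfWord z) w x := by
  rw [SwB, CwB, ← ((summable_norm_toReal_mul_pow (returnProb_le_one hθ) hx).of_norm
    ).sum_add_tsum_nat_add w.length]
  congr 1
  · rw [Finset.range_eq_Ico, Finset.sum_eq_sum_Ico_succ_bot hw, returnProb_zero]
    simp only [ENNReal.toReal_one, pow_zero, mul_one]
    congr 1
    refine Finset.sum_congr rfl fun j hj => ?_
    rw [returnProb_of_lt (Finset.mem_Ico.1 hj).2]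
    split_ifs <;> simp
  · exact tsum_congr fun j => by rw [returnProb_of_le (by omega), add_comm]

end Bamboo

theorem bamboo_occurrence_generating_function_general
    (q1 q00 : ℕ → Bool → ℝ≥0∞) (qinf : Bool → ℝ≥0∞)
    (hq1 : ∀ n, q1 n false + q1 n true = 1)
    (hq00 : ∀ n, q00 n false + q00 n true = 1)
    (hqinf : qinf false + qinf true = 1)
    (κ : Kernel L L) (hκ : IsBambooKernel q1 q00 qinf κ)
    (π : Measure L) [IsProbabilityMeasure π] (hπ : IsStationary κ π)
    (w : List Bool)
    (x : ℝ) (hx : |x| < 1) :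
    ∀ (ℓ : ℕ) (suffix : List Bool),
      (suffix = [false, false] ++ pow10 ℓ ∨
       suffix = [true, true] ++ pow01 ℓ ++ [false] ∨
       suffix = [false, false] ++ pow10 ℓ ++ [true] ∨
       suffix = [true, true] ++ pow01 ℓ) →
      suffix <:+ w →
      (genFun π w 1 x
         = x ^ w.length * (π (cyl w)).toReal
             / ((1 - x) * SwB q1 q00 qinf (pastOfWord suffix) w x) ∧
       ∀ r : ℕ, 1 ≤ r →
         genFun π w r x
           = genFun π w 1 x
               * (1 - 1 / SwB q1 q00 qinf (pastOfWord suffix) w x) ^ (r - 1)) := by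
  intro ℓ suffix hform hsuff
  have hz : HasStutter suffix := by
    rcases hform with rfl | rfl | rfl | rfl <;> exact ⟨_, [], _, rfl⟩
  have hθ := bambooTheta_add_bambooTheta hq1 hq00 hqinf
  have hw : 1 ≤ w.length := by linarith [hz.two_le_length, hsuff.length_le]
  simp only [genFun_eq_tsum_occProb, ← tsum_returnProb_eq_SwB hθ hw hx]
  exact tsum_occurrence_identities (occProb_le_one π w) (firstReturnProb_le_one hθ)
    (returnProb_le_one hθ) hx (sum_occProb_one_mul_returnProb hκ hπ hz hsuff) firstReturnProb_zero
    returnProb_zero (fun _ hj => returnProb_eq_sum hz hsuff hj) (occProb_add_two hκ hπ hz hsuff)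

/-- (Generating functions of word occurrences, bamboo
blossom.) For a SVLMC defined by a probabilized bamboo blossom and a word
`w = w₁…w_k` whose reversed word is not an internal node, for `|x| < 1` the
generating functions of the occurrences of `w` satisfy
`Φ_w⁽¹⁾(x) = x^k π(w) / ((1-x) S_w(x))` and
`Φ_w⁽ʳ⁾(x) = Φ_w⁽¹⁾(x)(1 - 1/S_w(x))^{r-1}`, where :
(i) if `w = *00(10)^ℓ` (resp. `*11(01)^ℓ0`), the conditioning past of `S_w` is
the reversed word of `pref(w) = (01)^ℓ00` (resp. `(01)^{ℓ+1}1`), i.e. the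
matched suffix of `w` itself;
(ii) if `w = *00(10)^ℓ1` (resp. `*11(01)^ℓ`), the conditioning past of `S_w` is
`1(01)^ℓ00` reversed, i.e. `00(10)^ℓ1` (resp. `(10)^ℓ11` reversed, i.e.
`11(01)^ℓ`), again the matched suffix of `w`. -/
theorem bamboo_occurrence_generating_function
    (q1 q00 : ℕ → Bool → ℝ≥0∞) (qinf : Bool → ℝ≥0∞)
    (hq1 : ∀ n, q1 n false + q1 n true = 1)
    (hq00 : ∀ n, q00 n false + q00 n true = 1)
    (hqinf : qinf false + qinf true = 1)
    (κ : Kernel L L) [IsMarkovKernel κ] (hκ : IsBambooKernel q1 q00 qinf κ)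
    (π : Measure L) [IsProbabilityMeasure π] (hπ : IsStationary κ π)
    (w : List Bool) (hlen : 1 ≤ w.length)
    (hint : ¬ ∃ n, w.reverse = pow01 n ∨ w.reverse = pow01 n ++ [false])
    (x : ℝ) (hx : |x| < 1) :
    ∀ (ℓ : ℕ) (suffix : List Bool),
      (suffix = [false, false] ++ pow10 ℓ ∨
       suffix = [true, true] ++ pow01 ℓ ++ [false] ∨
       suffix = [false, false] ++ pow10 ℓ ++ [true] ∨
       suffix = [true, true] ++ pow01 ℓ) →
      suffix <:+ w →
      (genFun π w 1 x
         = x ^ w.length * (π (cyl w)).toReal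
             / ((1 - x) * SwB q1 q00 qinf (pastOfWord suffix) w x) ∧
       ∀ r : ℕ, 1 ≤ r →
         genFun π w r x
           = genFun π w 1 x
               * (1 - 1 / SwB q1 q00 qinf (pastOfWord suffix) w x) ^ (r - 1)) :=
  bamboo_occurrence_generating_function_general q1 q00 qinf hq1 hq00 hqinf κ hκ π hπ w x hx

end VLMC
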